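/- arXiv:2503.01314 — 4 statements merged into one kernel-verified Lean document; each statement's English description precedes it below -/
import Mathlib

section
/- Let G = diag(λ₁,...,λ_d) be PSD, R ∈ R^{m×d} partitioned (after splitting coordinates into the first k and the remaining d−k) so that A = R_{0:k} G_{0:k} R_{0:k}^T + A_k with A_k := R_{k:} G_{k:} R_{k:}^T invertible. Define κ := G_{k:}^{1/2} R_{k:}^T A^{-1} R_{k:} G_{k:}^{1/2} − I and β := G_{0:k}^{1/2} R_{0:k}^T A^{-1} R_{k:} G_{k:}^{1/2}. Then κ² + β^T β = −κ. -/
open Matrix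

/-- with the block setup `A = R₀ G₀ R₀ᵀ + A_k`, `A_k := R₁ G₁ R₁ᵀ`, and
`κ := G₁^{1/2} R₁ᵀ A⁻¹ R₁ G₁^{1/2} − I`, `β := G₀^{1/2} R₀ᵀ A⁻¹ R₁ G₁^{1/2}`, one has
`κ² + βᵀ β = −κ`.  Here `S₀, S₁` are symmetric square roots of the diagonal blocks
`G₀, G₁` of the diagonal PSD matrix `G`. -/
theorem stmt6 {k dk m : ℕ}
    (G0 S0 : Matrix (Fin k) (Fin k) ℝ) (G1 S1 : Matrix (Fin dk) (Fin dk) ℝ)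
    (R0 : Matrix (Fin m) (Fin k) ℝ) (R1 : Matrix (Fin m) (Fin dk) ℝ)
    (hG0 : G0.PosSemidef) (hG1 : G1.PosSemidef)
    (hG0diag : ∀ i j, i ≠ j → G0 i j = 0) (hG1diag : ∀ i j, i ≠ j → G1 i j = 0)
    (hS0symm : S0ᵀ = S0) (hS0 : S0 * S0 = G0)
    (hS1symm : S1ᵀ = S1) (hS1 : S1 * S1 = G1)
    (A : Matrix (Fin m) (Fin m) ℝ) (hA : A = R0 * G0 * R0ᵀ + R1 * G1 * R1ᵀ)
    (hAinv : IsUnit A) (hAkinv : IsUnit (R1 * G1 * R1ᵀ)) :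
    let κ := S1 * R1ᵀ * A⁻¹ * R1 * S1 - 1
    let β := S0 * R0ᵀ * A⁻¹ * R1 * S1
    κ * κ + βᵀ * β = -κ := by
  intro κ β
  have hG0symm : G0ᵀ = G0 := by
    ext i j
    by_cases h : i = j
    · simp [h]
    · simp [transpose_apply, hG0diag i j h, hG0diag j i (Ne.symm h)]
  have hG1symm : G1ᵀ = G1 := by
    ext i j
    by_cases h : i = j
    · simp [h]
    · simp [transpose_apply, hG1diag i j h, hG1diag j i (Ne.symm h)]
  have hAsymm : Aᵀ = A := by
    rw [hA]
    simp only [transpose_add, transpose_mul, transpose_transpose, hG0symm, hG1symm,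
      Matrix.mul_assoc]
  have hAiT : A⁻¹ᵀ = A⁻¹ := by rw [transpose_nonsing_inv, hAsymm]
  have hAA : A⁻¹ * A * A⁻¹ = A⁻¹ := by
    rw [Matrix.nonsing_inv_mul A ((Matrix.isUnit_iff_isUnit_det A).mp hAinv), one_mul]
  have hβT : βᵀ = S1 * R1ᵀ * A⁻¹ * R0 * S0 := by
    show (S0 * R0ᵀ * A⁻¹ * R1 * S1)ᵀ = _
    simp only [transpose_mul, transpose_transpose, hS0symm, hS1symm, hAiT, Matrix.mul_assoc]
  set M := S1 * R1ᵀ * A⁻¹ * R1 * S1 with hM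
  have hM2 : M * M + βᵀ * β = M := by
    rw [hβT]
    show M * M + (S1 * R1ᵀ * A⁻¹ * R0 * S0) * (S0 * R0ᵀ * A⁻¹ * R1 * S1) = M
    have e1 : M * M = S1 * R1ᵀ * (A⁻¹ * (R1 * G1 * R1ᵀ) * A⁻¹) * (R1 * S1) := by
      rw [← hS1, hM]; simp only [Matrix.mul_assoc]
    have e2 : (S1 * R1ᵀ * A⁻¹ * R0 * S0) * (S0 * R0ᵀ * A⁻¹ * R1 * S1)
        = S1 * R1ᵀ * (A⁻¹ * (R0 * G0 * R0ᵀ) * A⁻¹) * (R1 * S1) := by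
      rw [← hS0]; simp only [Matrix.mul_assoc]
    rw [e1, e2]
    have : S1 * R1ᵀ * (A⁻¹ * (R1 * G1 * R1ᵀ) * A⁻¹) * (R1 * S1)
        + S1 * R1ᵀ * (A⁻¹ * (R0 * G0 * R0ᵀ) * A⁻¹) * (R1 * S1)
        = S1 * R1ᵀ * (A⁻¹ * A * A⁻¹) * (R1 * S1) := by
      rw [hA]; simp only [Matrix.mul_add, Matrix.add_mul, Matrix.mul_assoc]; abel
    rw [this, hAA, hM]; simp only [Matrix.mul_assoc]
  show (M - 1) * (M - 1) + βᵀ * β = -(M - 1)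
  calc (M - 1) * (M - 1) + βᵀ * β = (M * M + βᵀ * β) - M - M + 1 := by noncomm_ring
    _ = M - M - M + 1 := by rw [hM2]
    _ = -(M - 1) := by noncomm_ring
end

section
/- With the same block setup, α² + β β^T = G_{0:k}^{-1/2} (G_{0:k}^{-1} + R_{0:k}^T A_k^{-1} R_{0:k})^{-1} G_{0:k}^{-1/2}. -/
open Matrix

/-- with the same block setup, `α := G₀^{1/2} R₀ᵀ A⁻¹ R₀ G₀^{1/2} − I` and
`β := G₀^{1/2} R₀ᵀ A⁻¹ R₁ G₁^{1/2}` satisfy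
`α² + β βᵀ = G₀^{-1/2} (G₀⁻¹ + R₀ᵀ A_k⁻¹ R₀)⁻¹ G₀^{-1/2}`. -/
theorem stmt8 {k dk m : ℕ}
    (G0 S0 : Matrix (Fin k) (Fin k) ℝ) (G1 S1 : Matrix (Fin dk) (Fin dk) ℝ)
    (R0 : Matrix (Fin m) (Fin k) ℝ) (R1 : Matrix (Fin m) (Fin dk) ℝ)
    (hG0 : G0.PosDef) (hG1 : G1.PosSemidef)
    (hS0symm : S0ᵀ = S0) (hS0 : S0 * S0 = G0) (hS0inv : IsUnit S0)
    (hS1symm : S1ᵀ = S1) (hS1 : S1 * S1 = G1)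
    (Ak : Matrix (Fin m) (Fin m) ℝ) (hAk : Ak = R1 * G1 * R1ᵀ) (hAkinv : IsUnit Ak)
    (A : Matrix (Fin m) (Fin m) ℝ) (hA : A = R0 * G0 * R0ᵀ + Ak) (hAinv : IsUnit A)
    (hBinv : IsUnit (G0⁻¹ + R0ᵀ * Ak⁻¹ * R0)) :
    let α := S0 * R0ᵀ * A⁻¹ * R0 * S0 - 1
    let β := S0 * R0ᵀ * A⁻¹ * R1 * S1
    α * α + β * βᵀ = S0⁻¹ * (G0⁻¹ + R0ᵀ * Ak⁻¹ * R0)⁻¹ * S0⁻¹ := by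
  intro α β
  -- determinant units
  have hAd : IsUnit A.det := (Matrix.isUnit_iff_isUnit_det A).mp hAinv
  have hAkd : IsUnit Ak.det := (Matrix.isUnit_iff_isUnit_det Ak).mp hAkinv
  have hS0d : IsUnit S0.det := (Matrix.isUnit_iff_isUnit_det S0).mp hS0inv
  have hG0d : IsUnit G0.det := isUnit_iff_ne_zero.mpr hG0.det_pos.ne'
  -- basic inverse equations
  have hAA : A * A⁻¹ = 1 := Matrix.mul_nonsing_inv A hAd
  have hAA' : A⁻¹ * A = 1 := Matrix.nonsing_inv_mul A hAd
  have hKK : Ak * Ak⁻¹ = 1 := Matrix.mul_nonsing_inv Ak hAkd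
  have hKK' : Ak⁻¹ * Ak = 1 := Matrix.nonsing_inv_mul Ak hAkd
  have hSS : S0 * S0⁻¹ = 1 := Matrix.mul_nonsing_inv S0 hS0d
  have hSS' : S0⁻¹ * S0 = 1 := Matrix.nonsing_inv_mul S0 hS0d
  have hGG' : G0⁻¹ * G0 = 1 := Matrix.nonsing_inv_mul G0 hG0d
  -- cancellation lemmas
  have cA : ∀ x : Matrix (Fin m) (Fin k) ℝ, A * (A⁻¹ * x) = x := fun x => by
    rw [← Matrix.mul_assoc, hAA, Matrix.one_mul]
  have cA' : ∀ x : Matrix (Fin m) (Fin k) ℝ, A⁻¹ * (A * x) = x := fun x => by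
    rw [← Matrix.mul_assoc, hAA', Matrix.one_mul]
  have cK : ∀ x : Matrix (Fin m) (Fin k) ℝ, Ak * (Ak⁻¹ * x) = x := fun x => by
    rw [← Matrix.mul_assoc, hKK, Matrix.one_mul]
  have cK' : ∀ x : Matrix (Fin m) (Fin k) ℝ, Ak⁻¹ * (Ak * x) = x := fun x => by
    rw [← Matrix.mul_assoc, hKK', Matrix.one_mul]
  have cG' : ∀ x : Matrix (Fin k) (Fin k) ℝ, G0⁻¹ * (G0 * x) = x := fun x => by
    rw [← Matrix.mul_assoc, hGG', Matrix.one_mul]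
  -- symmetry facts
  have hG0T : G0ᵀ = G0 := by rw [← hS0, Matrix.transpose_mul, hS0symm]
  have hG1T : G1ᵀ = G1 := by rw [← hS1, Matrix.transpose_mul, hS1symm]
  have hAT : Aᵀ = A := by
    rw [hA, hAk]
    simp [Matrix.transpose_add, Matrix.transpose_mul, hG0T, hG1T, Matrix.mul_assoc]
  have hiAT : A⁻¹ᵀ = A⁻¹ := by rw [Matrix.transpose_nonsing_inv, hAT]
  -- key structural rewrites
  have k0 : ∀ x : Matrix (Fin m) (Fin k) ℝ,
      R0 * (G0 * (R0ᵀ * x)) = A * x - Ak * x := fun x => by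
    rw [← Matrix.mul_assoc, ← Matrix.mul_assoc, ← Matrix.sub_mul]
    congr 1
    rw [hA, add_sub_cancel_right]
  have k1 : ∀ x : Matrix (Fin m) (Fin k) ℝ,
      R1 * (G1 * (R1ᵀ * x)) = Ak * x := fun x => by
    rw [← Matrix.mul_assoc, ← Matrix.mul_assoc, hAk]
  have s1 : ∀ x : Matrix (Fin dk) (Fin k) ℝ, S1 * (S1 * x) = G1 * x := fun x => by
    rw [← Matrix.mul_assoc, hS1]
  have s0 : ∀ x : Matrix (Fin k) (Fin k) ℝ, S0 * (S0 * x) = G0 * x := fun x => by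
    rw [← Matrix.mul_assoc, hS0]
  have sg : ∀ x : Matrix (Fin k) (Fin k) ℝ, S0⁻¹ * (G0 * x) = S0 * x := fun x => by
    rw [← hS0, Matrix.mul_assoc, ← Matrix.mul_assoc, hSS', Matrix.one_mul]
  have g0s : G0 * S0⁻¹ = S0 := by rw [← hS0, Matrix.mul_assoc, hSS, Matrix.mul_one]
  -- Woodbury identity
  have hW : (G0⁻¹ + R0ᵀ * Ak⁻¹ * R0)⁻¹ = G0 - G0 * R0ᵀ * A⁻¹ * R0 * G0 := by
    apply Matrix.inv_eq_right_inv
    simp only [add_mul, mul_sub, sub_mul, Matrix.mul_sub, Matrix.mul_assoc, k0, hGG', cG', cA, cA',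
      cK, cK']
    abel
  -- transpose of β
  have hβT : βᵀ = S1 * (R1ᵀ * (A⁻¹ * (R0 * S0))) := by
    show (S0 * R0ᵀ * A⁻¹ * R1 * S1)ᵀ = _
    simp [Matrix.transpose_mul, hS1symm, hS0symm, hiAT, Matrix.mul_assoc]
  rw [hW, hβT]
  show (S0 * R0ᵀ * A⁻¹ * R0 * S0 - 1) * (S0 * R0ᵀ * A⁻¹ * R0 * S0 - 1) +
      (S0 * R0ᵀ * A⁻¹ * R1 * S1) * (S1 * (R1ᵀ * (A⁻¹ * (R0 * S0)))) =
      S0⁻¹ * (G0 - G0 * R0ᵀ * A⁻¹ * R0 * G0) * S0⁻¹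
  simp only [sub_mul, mul_sub, Matrix.mul_sub, Matrix.sub_mul, one_mul, mul_one, Matrix.mul_assoc,
    s0, s1, k0, k1, cA, cA', cK, cK', sg, g0s, hSS, hSS']
  abel
end

section
/- Assume hypercontractivity with constant α, the misspecified-noise condition E[‖y − W*^T x‖² x x^T] ⪯ σ² G, and that the approximation error satisfies Approx ≤ ‖W*‖_G². Then for V* := (RGR^T)^{-1} R G W*, E[‖V*^T R x − y‖² (Rx)(Rx)^T] ⪯ 2(σ² + α ‖W*‖_G²) R G R^T. -/
open Matrix MeasureTheory

/-- Squared Frobenius norm of a matrix. -/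
noncomputable def frobSq {a b : ℕ} (A : Matrix (Fin a) (Fin b) ℝ) : ℝ :=
  ∑ i, ∑ j, (A i j) ^ 2

section Helpers
variable {d m : ℕ} {Ω : Type*} [MeasurableSpace Ω] {μ : Measure Ω}
variable {x : Ω → Fin d → ℝ} {R : Matrix (Fin m) (Fin d) ℝ}

lemma expand_u (R : Matrix (Fin m) (Fin d) ℝ) (x : Ω → Fin d → ℝ) (f : Ω → ℝ) (i j : Fin m) :
    (fun ω => f ω * (R.mulVec (x ω) i * R.mulVec (x ω) j))
      = fun ω => ∑ a, ∑ b, (R i a * R j b) * (f ω * (x ω a * x ω b)) := by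
  funext ω
  rw [Matrix.mulVec, Matrix.mulVec, dotProduct, dotProduct, Finset.sum_mul_sum, Finset.mul_sum]
  refine Finset.sum_congr rfl fun a _ => ?_
  rw [Finset.mul_sum]
  exact Finset.sum_congr rfl fun b _ => by ring

lemma integrable_u {f : Ω → ℝ}
    (hf : ∀ a b, Integrable (fun ω => f ω * (x ω a * x ω b)) μ) (i j : Fin m) :
    Integrable (fun ω => f ω * (R.mulVec (x ω) i * R.mulVec (x ω) j)) μ := by
  rw [expand_u]
  exact integrable_finset_sum _ fun a _ => integrable_finset_sum _ fun b _ =>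
    ((hf a b).const_mul _)

lemma integral_u {f : Ω → ℝ}
    (hf : ∀ a b, Integrable (fun ω => f ω * (x ω a * x ω b)) μ) (i j : Fin m) :
    ∫ ω, f ω * (R.mulVec (x ω) i * R.mulVec (x ω) j) ∂μ
      = (R * (Matrix.of fun a b => ∫ ω, f ω * (x ω a * x ω b) ∂μ) * Rᵀ) i j := by
  rw [expand_u]
  rw [integral_finset_sum _ fun a _ => integrable_finset_sum _ fun b _ => ((hf a b).const_mul _)]
  have h1 : ∀ a : Fin d, ∫ ω, ∑ b, (R i a * R j b) * (f ω * (x ω a * x ω b)) ∂μ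
      = ∑ b, (R i a * R j b) * ∫ ω, f ω * (x ω a * x ω b) ∂μ := by
    intro a
    rw [integral_finset_sum _ fun b _ => ((hf a b).const_mul _)]
    exact Finset.sum_congr rfl fun b _ => integral_const_mul _ _
  simp only [h1]
  simp only [Matrix.mul_apply, Matrix.transpose_apply, Matrix.of_apply, Finset.sum_mul]
  rw [Finset.sum_comm]
  exact Finset.sum_congr rfl fun a _ => Finset.sum_congr rfl fun b _ => by ring

lemma psd_of_nonneg (R : Matrix (Fin m) (Fin d) ℝ) {f : Ω → ℝ} (h0 : ∀ ω, 0 ≤ f ω)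
    (hf : ∀ a b, Integrable (fun ω => f ω * (x ω a * x ω b)) μ) :
    (Matrix.of fun i j : Fin m =>
      ∫ ω, f ω * (R.mulVec (x ω) i * R.mulVec (x ω) j) ∂μ).PosSemidef := by
  rw [Matrix.posSemidef_iff_dotProduct_mulVec]
  constructor
  · ext i j
    simp only [Matrix.conjTranspose_apply, Matrix.of_apply, star_trivial]
    congr 1; funext ω; ring
  · intro v
    have hI : ∀ i j : Fin m,
        Integrable (fun ω => f ω * (R.mulVec (x ω) i * R.mulVec (x ω) j)) μ :=
      fun i j => integrable_u hf i j
    have e1 : ∀ i j : Fin m, v i * ((∫ ω, f ω * (R.mulVec (x ω) i * R.mulVec (x ω) j) ∂μ) * v j)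
        = ∫ ω, (v i * v j) * (f ω * (R.mulVec (x ω) i * R.mulVec (x ω) j)) ∂μ := by
      intro i j
      rw [integral_const_mul]; ring
    have quad : ∀ (c : Matrix (Fin m) (Fin m) ℝ),
        dotProduct (star v) (c *ᵥ v) = ∑ i, ∑ j, v i * (c i j * v j) := by
      intro c
      simp [dotProduct, Matrix.mulVec, Finset.mul_sum, mul_assoc]
    have key : dotProduct (star v) ((Matrix.of fun i j : Fin m =>
          ∫ ω, f ω * (R.mulVec (x ω) i * R.mulVec (x ω) j) ∂μ) *ᵥ v)
        = ∫ ω, f ω * (∑ i, v i * R.mulVec (x ω) i) ^ 2 ∂μ := by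
      rw [quad]
      simp only [Matrix.of_apply, e1]
      have step1 : ∀ i : Fin m, ∑ j, ∫ ω, v i * v j * (f ω *
            (R.mulVec (x ω) i * R.mulVec (x ω) j)) ∂μ
          = ∫ ω, ∑ j, v i * v j * (f ω * (R.mulVec (x ω) i * R.mulVec (x ω) j)) ∂μ :=
        fun i => (integral_finset_sum _ fun j _ => ((hI i j).const_mul _)).symm
      simp only [step1]
      rw [← integral_finset_sum _ fun i _ => integrable_finset_sum _ fun j _ =>
        ((hI i j).const_mul (v i * v j))]
      · congr 1; funext ω
        rw [sq, Finset.sum_mul_sum, Finset.mul_sum]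
        refine Finset.sum_congr rfl fun a _ => ?_
        rw [Finset.mul_sum]
        exact Finset.sum_congr rfl fun b _ => by ring
    rw [key]
    exact integral_nonneg fun ω => mul_nonneg (h0 ω) (sq_nonneg _)
end Helpers

lemma psd_smul' {n : ℕ} {A : Matrix (Fin n) (Fin n) ℝ} (h : A.PosSemidef) {r : ℝ} (hr : 0 ≤ r) :
    (r • A).PosSemidef := by
  refine Matrix.PosSemidef.of_dotProduct_mulVec_nonneg ?_ fun v => ?_
  · show (r • A)ᴴ = r • A
    rw [Matrix.conjTranspose_smul, star_trivial, h.1]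
  · rw [Matrix.smul_mulVec, dotProduct_smul, smul_eq_mul]
    exact mul_nonneg hr (h.dotProduct_mulVec_nonneg v)

lemma psd_add' {n : ℕ} {A B : Matrix (Fin n) (Fin n) ℝ} (hA : A.PosSemidef)
    (hB : B.PosSemidef) : (A + B).PosSemidef := by
  refine Matrix.PosSemidef.of_dotProduct_mulVec_nonneg (hA.1.add hB.1) fun v => ?_
  rw [Matrix.add_mulVec, dotProduct_add]
  exact add_nonneg (hA.dotProduct_mulVec_nonneg v) (hB.dotProduct_mulVec_nonneg v)

lemma trace_mul_transpose_self {a b : ℕ} (B : Matrix (Fin a) (Fin b) ℝ) :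
    (B * Bᵀ).trace = frobSq B := by
  simp [Matrix.trace, Matrix.mul_apply, frobSq, Matrix.diag, sq]

/-- under hypercontractivity with constant `α`, the misspecified-noise
condition `E[‖y − W*ᵀx‖² xxᵀ] ⪯ σ² G`, and `Approx ≤ ‖W*‖_G²`, the sketched optimum
`V* := (R G Rᵀ)⁻¹ R G W*` satisfies
`E[‖V*ᵀ R x − y‖² (Rx)(Rx)ᵀ] ⪯ 2(σ² + α ‖W*‖_G²) (R G Rᵀ)`. -/
theorem stmt11 {d m p : ℕ} {Ω : Type*} [MeasurableSpace Ω] (μ : Measure Ω)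
    [IsProbabilityMeasure μ]
    (x : Ω → Fin d → ℝ) (y : Ω → Fin p → ℝ)
    (G S : Matrix (Fin d) (Fin d) ℝ) (Wstar : Matrix (Fin d) (Fin p) ℝ)
    (R : Matrix (Fin m) (Fin d) ℝ)
    (hG : ∀ i j, G i j = ∫ ω, x ω i * x ω j ∂μ)
    (hSsymm : Sᵀ = S) (hS : S * S = G)
    (hinv : IsUnit (R * G * Rᵀ))
    (α : ℝ) (hα : 1 ≤ α)
    (hint4 : ∀ i j k l, Integrable (fun ω => x ω i * x ω j * x ω k * x ω l) μ)
    (hintnoise : ∀ i j, Integrable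
      (fun ω => (∑ l, ((y ω - Wstarᵀ.mulVec (x ω)) l) ^ 2) * (x ω i * x ω j)) μ)
    (hintres : ∀ i j, Integrable
      (fun ω => (∑ l, ((((R * G * Rᵀ)⁻¹ * R * G * Wstar)ᵀ.mulVec (R.mulVec (x ω)) - y ω) l) ^ 2)
        * (x ω i * x ω j)) μ)
    (hhyper : ∀ A : Matrix (Fin d) (Fin d) ℝ, A.PosSemidef →
      ((α * (G * A).trace) • G -
        Matrix.of (fun i j => ∫ ω,
          (vecMulVec (x ω) (x ω) * A * vecMulVec (x ω) (x ω)) i j ∂μ)).PosSemidef)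
    (σ2 : ℝ)
    (hnoise : ((σ2 • G) -
      Matrix.of (fun i j => ∫ ω,
        (∑ l, ((y ω - Wstarᵀ.mulVec (x ω)) l) ^ 2) * (x ω i * x ω j) ∂μ)).PosSemidef)
    (happrox : frobSq (S * (Rᵀ * ((R * G * Rᵀ)⁻¹ * R * G * Wstar) - Wstar)) ≤
      (Wstarᵀ * G * Wstar).trace) :
    let Vstar := (R * G * Rᵀ)⁻¹ * R * G * Wstar
    (((2 * (σ2 + α * (Wstarᵀ * G * Wstar).trace)) • (R * G * Rᵀ)) -
      Matrix.of (fun i j => ∫ ω,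
        (∑ l, ((Vstarᵀ.mulVec (R.mulVec (x ω)) - y ω) l) ^ 2) *
          (R.mulVec (x ω) i * R.mulVec (x ω) j) ∂μ)).PosSemidef := by
  intro Vstar
  have hVstar : Vstar = (R * G * Rᵀ)⁻¹ * R * G * Wstar := rfl
  set D : Matrix (Fin d) (Fin p) ℝ := Rᵀ * Vstar - Wstar with hD
  set A : Matrix (Fin d) (Fin d) ℝ := D * Dᵀ with hA
  set c : ℝ := (Wstarᵀ * G * Wstar).trace with hc
  set t : ℝ := (G * A).trace with ht
  -- the three pointwise scalar functions
  set fb : Ω → ℝ := fun ω => ∑ l, ((y ω - Wstarᵀ.mulVec (x ω)) l) ^ 2 with hfb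
  set fg : Ω → ℝ := fun ω => ∑ l, ((Dᵀ.mulVec (x ω)) l) ^ 2 with hfg
  set fr : Ω → ℝ := fun ω => ∑ l, ((Vstarᵀ.mulVec (R.mulVec (x ω)) - y ω) l) ^ 2 with hfr
  -- fg expansion
  have hfgA : ∀ ω, fg ω = ∑ k, ∑ l, A k l * (x ω k * x ω l) := by
    intro ω
    have h1 : fg ω = (Dᵀ.mulVec (x ω)) ⬝ᵥ (Dᵀ.mulVec (x ω)) := by
      simp [hfg, dotProduct, sq]
    rw [h1, Matrix.dotProduct_mulVec, Matrix.vecMul_transpose, Matrix.mulVec_mulVec, ← hA]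
    simp only [dotProduct, Matrix.mulVec, Finset.sum_mul]
    exact Finset.sum_congr rfl fun k _ => Finset.sum_congr rfl fun l _ => by ring
  -- integrability of the three scalar functions against x a * x b
  have hIb : ∀ a b, Integrable (fun ω => fb ω * (x ω a * x ω b)) μ := hintnoise
  have hIr : ∀ a b, Integrable (fun ω => fr ω * (x ω a * x ω b)) μ := hintres
  have hIg : ∀ a b, Integrable (fun ω => fg ω * (x ω a * x ω b)) μ := by
    intro a b
    have heq : (fun ω => fg ω * (x ω a * x ω b))
        = fun ω => ∑ k, ∑ l, A k l * (x ω k * x ω l * x ω a * x ω b) := by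
      funext ω
      rw [hfgA ω, Finset.sum_mul]
      refine Finset.sum_congr rfl fun k _ => ?_
      rw [Finset.sum_mul]
      exact Finset.sum_congr rfl fun l _ => by ring
    rw [heq]
    exact integrable_finset_sum _ fun k _ => integrable_finset_sum _ fun l _ =>
      ((hint4 k l a b).const_mul _)
  -- conjTranspose = transpose over ℝ
  have hRT : Rᴴ = Rᵀ := Matrix.conjTranspose_eq_transpose_of_trivial R
  -- PSD facts
  have hApsd : A.PosSemidef := by
    have := Matrix.posSemidef_self_mul_conjTranspose D
    rwa [Matrix.conjTranspose_eq_transpose_of_trivial, ← hA] at this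
  have hGpsd : G.PosSemidef := by
    have := Matrix.posSemidef_conjTranspose_mul_self S
    rwa [Matrix.conjTranspose_eq_transpose_of_trivial, hSsymm, hS] at this
  have hRGR : (R * G * Rᵀ).PosSemidef := by
    have := hGpsd.mul_mul_conjTranspose_same R
    rwa [hRT] at this
  -- trace identity : t = frobSq (S * D)
  have htfrob : t = frobSq (S * D) := by
    rw [← trace_mul_transpose_self (S * D), Matrix.transpose_mul, hSsymm, ht, hA, ← hS]
    rw [show S * D * (Dᵀ * S) = (S * D * Dᵀ) * S from (Matrix.mul_assoc (S * D) Dᵀ S).symm,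
      Matrix.trace_mul_comm (S * D * Dᵀ) S]
    congr 1
    simp [Matrix.mul_assoc]
  have hct : t ≤ c := by rw [htfrob]; exact happrox
  have ht0 : 0 ≤ t := by
    rw [htfrob]
    exact Finset.sum_nonneg fun i _ => Finset.sum_nonneg fun j _ => sq_nonneg _
  -- matrices of second moments
  set Nb : Matrix (Fin d) (Fin d) ℝ :=
    Matrix.of (fun a b => ∫ ω, fb ω * (x ω a * x ω b) ∂μ) with hNb
  set Q : Matrix (Fin d) (Fin d) ℝ :=
    Matrix.of (fun a b => ∫ ω, fg ω * (x ω a * x ω b) ∂μ) with hQdef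
  have hP1 : (σ2 • G - Nb).PosSemidef := hnoise
  have hP2 : ((α * t) • G - Q).PosSemidef := by
    have h2 := hhyper A hApsd
    have hQent : (Matrix.of fun i j => ∫ ω,
        (vecMulVec (x ω) (x ω) * A * vecMulVec (x ω) (x ω)) i j ∂μ) = Q := by
      ext i j
      simp only [Matrix.of_apply, hQdef]
      congr 1
      funext ω
      simp only [Matrix.mul_apply, Matrix.vecMulVec_apply, hfgA ω, Finset.sum_mul]
      rw [Finset.sum_comm]
      exact Finset.sum_congr rfl fun a _ => Finset.sum_congr rfl fun b _ => by ring
    rwa [hQent, ← ht] at h2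
  -- congruence PSD matrices
  have hC1 : (R * (σ2 • G - Nb) * Rᵀ).PosSemidef := by
    have := hP1.mul_mul_conjTranspose_same R
    rwa [hRT] at this
  have hC2 : (R * ((α * t) • G - Q) * Rᵀ).PosSemidef := by
    have := hP2.mul_mul_conjTranspose_same R
    rwa [hRT] at this
  -- residual decomposition
  have hres : ∀ ω, ∀ l, (Vstarᵀ.mulVec (R.mulVec (x ω)) - y ω) l
      = (Dᵀ.mulVec (x ω)) l - (y ω - Wstarᵀ.mulVec (x ω)) l := by
    intro ω l
    have hDt : Dᵀ = Vstarᵀ * R - Wstarᵀ := by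
      rw [hD, Matrix.transpose_sub, Matrix.transpose_mul, Matrix.transpose_transpose]
    rw [hDt]
    simp only [Matrix.sub_mulVec, Matrix.mulVec_mulVec, Pi.sub_apply]
    ring
  have hfr_le : ∀ ω, fr ω ≤ 2 * fg ω + 2 * fb ω := by
    intro ω
    simp only [hfr, hfg, hfb]
    rw [Finset.mul_sum, Finset.mul_sum, ← Finset.sum_add_distrib]
    refine Finset.sum_le_sum fun l _ => ?_
    rw [hres ω l]
    nlinarith [sq_nonneg ((Dᵀ.mulVec (x ω)) l + (y ω - Wstarᵀ.mulVec (x ω)) l)]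
  set f3 : Ω → ℝ := fun ω => 2 * fg ω + 2 * fb ω - fr ω with hf3
  have hf30 : ∀ ω, 0 ≤ f3 ω := fun ω => by simp only [hf3]; linarith [hfr_le ω]
  have hI3 : ∀ a b, Integrable (fun ω => f3 ω * (x ω a * x ω b)) μ := by
    intro a b
    have e : (fun ω => f3 ω * (x ω a * x ω b))
        = fun ω => (2 * (fg ω * (x ω a * x ω b)) + 2 * (fb ω * (x ω a * x ω b)))
          - fr ω * (x ω a * x ω b) := funext fun ω => by simp only [hf3]; ring
    rw [e]
    exact (((hIg a b).const_mul 2).add ((hIb a b).const_mul 2)).sub (hIr a b)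
  have hM3psd : (Matrix.of fun i j : Fin m =>
      ∫ ω, f3 ω * (R.mulVec (x ω) i * R.mulVec (x ω) j) ∂μ).PosSemidef :=
    psd_of_nonneg R hf30 hI3
  -- second-moment matrix identities
  have hMb : (Matrix.of fun i j : Fin m =>
      ∫ ω, fb ω * (R.mulVec (x ω) i * R.mulVec (x ω) j) ∂μ) = R * Nb * Rᵀ := by
    ext i j; exact integral_u hIb i j
  have hMg : (Matrix.of fun i j : Fin m =>
      ∫ ω, fg ω * (R.mulVec (x ω) i * R.mulVec (x ω) j) ∂μ) = R * Q * Rᵀ := by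
    ext i j; exact integral_u hIg i j
  have hM3 : (Matrix.of fun i j : Fin m =>
        ∫ ω, f3 ω * (R.mulVec (x ω) i * R.mulVec (x ω) j) ∂μ)
      = (2:ℝ) • (R * Q * Rᵀ) + (2:ℝ) • (R * Nb * Rᵀ) - (Matrix.of fun i j : Fin m =>
        ∫ ω, fr ω * (R.mulVec (x ω) i * R.mulVec (x ω) j) ∂μ) := by
    rw [← hMb, ← hMg]
    ext i j
    simp only [Matrix.add_apply, Matrix.sub_apply, Matrix.smul_apply, Matrix.of_apply,
      smul_eq_mul]
    have e : (fun ω => f3 ω * (R.mulVec (x ω) i * R.mulVec (x ω) j))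
        = fun ω => 2 * (fg ω * (R.mulVec (x ω) i * R.mulVec (x ω) j))
            + 2 * (fb ω * (R.mulVec (x ω) i * R.mulVec (x ω) j))
            - fr ω * (R.mulVec (x ω) i * R.mulVec (x ω) j) :=
      funext fun ω => by simp only [hf3]; ring
    have h2g : Integrable (fun ω => 2 * (fg ω * (R.mulVec (x ω) i * R.mulVec (x ω) j))) μ :=
      (integrable_u hIg i j).const_mul 2
    have h2b : Integrable (fun ω => 2 * (fb ω * (R.mulVec (x ω) i * R.mulVec (x ω) j))) μ :=
      (integrable_u hIb i j).const_mul 2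
    have hadd : Integrable (fun ω => 2 * (fg ω * (R.mulVec (x ω) i * R.mulVec (x ω) j))
        + 2 * (fb ω * (R.mulVec (x ω) i * R.mulVec (x ω) j))) μ := h2g.add h2b
    rw [e, integral_sub hadd (integrable_u hIr i j), integral_add h2g h2b,
      integral_const_mul, integral_const_mul]
  -- the key algebraic identity
  have main_eq : (2 * (σ2 + α * c)) • (R * G * Rᵀ) -
      (Matrix.of fun i j : Fin m =>
        ∫ ω, fr ω * (R.mulVec (x ω) i * R.mulVec (x ω) j) ∂μ)
      = (2:ℝ) • (R * (σ2 • G - Nb) * Rᵀ) + (2:ℝ) • (R * ((α * t) • G - Q) * Rᵀ)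
        + (2 * α * (c - t)) • (R * G * Rᵀ)
        + (Matrix.of fun i j : Fin m =>
          ∫ ω, f3 ω * (R.mulVec (x ω) i * R.mulVec (x ω) j) ∂μ) := by
    rw [hM3]
    simp only [Matrix.mul_sub, Matrix.sub_mul, Matrix.mul_smul, Matrix.smul_mul]
    module
  -- conclusion
  show ((2 * (σ2 + α * c)) • (R * G * Rᵀ) -
      (Matrix.of fun i j : Fin m =>
        ∫ ω, fr ω * (R.mulVec (x ω) i * R.mulVec (x ω) j) ∂μ)).PosSemidef
  rw [main_eq]
  have h2nonneg : (0:ℝ) ≤ 2 := by norm_num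
  have hcoef : (0:ℝ) ≤ 2 * α * (c - t) := by nlinarith
  exact psd_add' (psd_add' (psd_add'
    (psd_smul' hC1 h2nonneg)
    (psd_smul' hC2 h2nonneg))
    (psd_smul' hRGR hcoef)) hM3psd
end

section
/- Under Gaussianity x ~ N(0,G) and the well-specified condition E[y|x] = W*^T x with σ² := E‖y − W*^T x‖², the sketched optimal predictor satisfies E[‖y − V*^T R x‖²] = σ² + Approx ≥ σ², where V* := (RGR^T)^{-1} R G W* and Approx := ‖(I − G^{1/2}R^T(RGR^T)^{-1}RG^{1/2}) G^{1/2} W*‖_F². -/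
open Matrix MeasureTheory ProbabilityTheory

/-- A random vector `x` is (mean-zero) Gaussian with covariance `G` iff every linear
functional `⟨u, x⟩` is distributed as `N(0, uᵀ G u)`. -/
def IsGaussianVec {d : ℕ} {Ω : Type*} [MeasurableSpace Ω] (μ : Measure Ω)
    (x : Ω → Fin d → ℝ) (G : Matrix (Fin d) (Fin d) ℝ) : Prop :=
  ∀ u : Fin d → ℝ,
    Measure.map (fun ω => u ⬝ᵥ x ω) μ = gaussianReal 0 (u ⬝ᵥ G.mulVec u).toNNReal

/-- under Gaussianity `x ~ N(0,G)` and the well-specified condition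
`E[y|x] = W*ᵀx` with `σ² := E‖y − W*ᵀx‖²`, the sketched optimal predictor
`V* := (R G Rᵀ)⁻¹ R G W*` satisfies `E‖y − V*ᵀ R x‖² = σ² + Approx ≥ σ²`, where
`Approx := ‖(I − G^{1/2}Rᵀ(RGRᵀ)⁻¹RG^{1/2}) G^{1/2} W*‖_F²` (with `S = G^{1/2}`). -/
theorem stmt14 {d m p : ℕ} {Ω : Type*} [MeasurableSpace Ω] (μ : Measure Ω)
    [IsProbabilityMeasure μ]
    (x : Ω → Fin d → ℝ) (y : Ω → Fin p → ℝ)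
    (G S : Matrix (Fin d) (Fin d) ℝ) (hG : G.PosDef)
    (hSsymm : Sᵀ = S) (hSq : S * S = G)
    (hx : IsGaussianVec μ x G)
    (hsecond : ∀ i j, G i j = ∫ ω, x ω i * x ω j ∂μ)
    (hintxx : ∀ i j, Integrable (fun ω => x ω i * x ω j) μ)
    (hxmeas : Measurable x)
    (Wstar : Matrix (Fin d) (Fin p) ℝ)
    (hcond : ∀ j, (μ[(fun ω => y ω j) | MeasurableSpace.comap x inferInstance])
        =ᵐ[μ] fun ω => Wstarᵀ.mulVec (x ω) j)
    (hintxy : ∀ i j, Integrable (fun ω => x ω i * (y ω j - Wstarᵀ.mulVec (x ω) j)) μ)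
    (hintL : ∀ W : Matrix (Fin d) (Fin p) ℝ,
      Integrable (fun ω => ∑ j, ((y ω - Wᵀ.mulVec (x ω)) j) ^ 2) μ)
    (R : Matrix (Fin m) (Fin d) ℝ) (hinv : IsUnit (R * G * Rᵀ)) :
    let Vstar := (R * G * Rᵀ)⁻¹ * R * G * Wstar
    let σ2 : ℝ := ∫ ω, ∑ j, ((y ω - Wstarᵀ.mulVec (x ω)) j) ^ 2 ∂μ
    let Approx : ℝ := frobSq (((1 : Matrix (Fin d) (Fin d) ℝ)
        - S * Rᵀ * (R * G * Rᵀ)⁻¹ * R * S) * S * Wstar)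
    (∫ ω, ∑ j, ((y ω - Vstarᵀ.mulVec (R.mulVec (x ω))) j) ^ 2 ∂μ = σ2 + Approx) ∧
    σ2 ≤ ∫ ω, ∑ j, ((y ω - Vstarᵀ.mulVec (R.mulVec (x ω))) j) ^ 2 ∂μ := by
  intro Vstar σ2 Approx
  classical
  set ε : Fin p → Ω → ℝ := fun j ω => y ω j - Wstarᵀ.mulVec (x ω) j with hεdef
  have hm : MeasurableSpace.comap x inferInstance ≤ ‹MeasurableSpace Ω› := hxmeas.comap_le
  haveI : SigmaFinite (μ.trim hm) := by
    have : IsFiniteMeasure (μ.trim hm) := isFiniteMeasure_trim hm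
    infer_instance
  have hxi_meas : ∀ i, Measurable fun ω => x ω i :=
    fun i => (measurable_pi_apply i).comp hxmeas
  -- |a| ≤ 1 + a^2
  have habs : ∀ a : ℝ, ‖a‖ ≤ 1 + a ^ 2 := by
    intro a
    rw [Real.norm_eq_abs]
    nlinarith [abs_nonneg a, sq_abs a, sq_nonneg (|a| - 1)]
  have hxi_int : ∀ i, Integrable (fun ω => x ω i) μ := by
    intro i
    refine Integrable.mono' ((integrable_const (1:ℝ)).add (hintxx i i))
      (hxi_meas i).aestronglyMeasurable ?_
    filter_upwards with ω
    simpa [sq] using habs (x ω i)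
  -- (Wᵀ x)_j as a finite sum
  have hmv : ∀ (W : Matrix (Fin d) (Fin p) ℝ) (v : Fin d → ℝ) (j : Fin p),
      Wᵀ.mulVec v j = ∑ i, W i j * v i := by
    intro W v j
    simp [Matrix.mulVec, dotProduct, Matrix.transpose_apply]
  have hWx_int : ∀ j, Integrable (fun ω => Wstarᵀ.mulVec (x ω) j) μ := by
    intro j
    have : Integrable (fun ω => ∑ i, Wstar i j * x ω i) μ :=
      integrable_finset_sum _ fun i _ => (hxi_int i).const_mul _
    exact this.congr (by filter_upwards with ω; rw [hmv])
  -- x_i ≠ 0 a.e.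
  have hne : ∀ i : Fin d, ∀ᵐ ω ∂μ, x ω i ≠ 0 := by
    intro i
    have hGii : 0 < G i i := by
      have := hG.dotProduct_mulVec_pos (x := Pi.single i 1) (by intro h; simpa using congrFun h i)
      simpa [Matrix.mulVec_single, dotProduct, Pi.single_apply, Finset.sum_ite_eq'] using this
    have hmap : Measure.map (fun ω => x ω i) μ = gaussianReal 0 (G i i).toNNReal := by
      have := hx (Pi.single i 1)
      simpa [Matrix.mulVec_single, dotProduct, Pi.single_apply, Finset.sum_ite_eq',
        Finset.sum_ite_eq] using this
    have hv : (G i i).toNNReal ≠ 0 := by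
      simp only [ne_eq, Real.toNNReal_eq_zero, not_le]
      exact hGii
    have h0 : μ ((fun ω => x ω i) ⁻¹' {0}) = 0 := by
      rw [← Measure.map_apply (hxi_meas i) (measurableSet_singleton 0), hmap]
      exact (gaussianReal_absolutelyContinuous 0 hv) (measure_singleton 0)
    exact (ae_iff).2 (by simpa [Set.preimage, Set.mem_singleton_iff] using h0)
  -- cross terms vanish
  have hcross : ∀ (i : Fin d) (j : Fin p), ∫ ω, x ω i * ε j ω ∂μ = 0 := by
    intro i j
    -- a.e. strong measurability of ε j
    have haesm : AEStronglyMeasurable (ε j) μ := by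
      have h1 : AEStronglyMeasurable (fun ω => (x ω i * ε j ω) / x ω i) μ :=
        ((hintxy i j).aestronglyMeasurable.aemeasurable.div
          (hxi_meas i).aemeasurable).aestronglyMeasurable
      refine h1.congr ?_
      filter_upwards [hne i] with ω hω
      rw [mul_comm, mul_div_assoc, div_self hω, mul_one]
    have hε2_int : Integrable (fun ω => (ε j ω) ^ 2) μ := by
      refine Integrable.mono' (hintL Wstar) (haesm.pow 2) ?_
      filter_upwards with ω
      rw [Real.norm_eq_abs, abs_of_nonneg (sq_nonneg _)]
      exact Finset.single_le_sum (fun k _ => sq_nonneg ((y ω - Wstarᵀ.mulVec (x ω)) k))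
        (Finset.mem_univ j)
    have hε_int : Integrable (ε j) μ := by
      refine Integrable.mono' ((integrable_const (1:ℝ)).add hε2_int) haesm ?_
      filter_upwards with ω
      exact habs (ε j ω)
    have hy_int : Integrable (fun ω => y ω j) μ := by
      have : Integrable (fun ω => ε j ω + Wstarᵀ.mulVec (x ω) j) μ := hε_int.add (hWx_int j)
      exact this.congr (by filter_upwards with ω; simp [hεdef])
    -- conditional expectation of ε j is 0
    have hxm : Measurable[MeasurableSpace.comap x inferInstance] x :=
      Measurable.of_comap_le le_rfl
    have hsmWx : StronglyMeasurable[MeasurableSpace.comap x inferInstance]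
        (fun ω => Wstarᵀ.mulVec (x ω) j) := by
      have heqf : (fun ω => Wstarᵀ.mulVec (x ω) j) = fun ω => ∑ k, Wstar k j * x ω k :=
        funext fun ω => hmv _ _ _
      rw [heqf]
      exact (Finset.measurable_sum Finset.univ
        (fun k _ => ((measurable_pi_apply k).comp hxm).const_mul _)).stronglyMeasurable
    have hcondε : (μ[ε j | MeasurableSpace.comap x inferInstance]) =ᵐ[μ] 0 := by
      have hsub : (μ[ε j | MeasurableSpace.comap x inferInstance]) =ᵐ[μ]
          (μ[(fun ω => y ω j) | MeasurableSpace.comap x inferInstance])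
          - (μ[(fun ω => Wstarᵀ.mulVec (x ω) j) | MeasurableSpace.comap x inferInstance]) :=
        condExp_sub hy_int (hWx_int j) _
      have heq : (μ[(fun ω => Wstarᵀ.mulVec (x ω) j) | MeasurableSpace.comap x inferInstance])
          = fun ω => Wstarᵀ.mulVec (x ω) j :=
        condExp_of_stronglyMeasurable hm hsmWx (hWx_int j)
      refine hsub.trans ?_
      rw [heq]
      filter_upwards [hcond j] with ω hω
      simp [hω]
    have hsmx : StronglyMeasurable[MeasurableSpace.comap x inferInstance]
        (fun ω => x ω i) :=
      ((measurable_pi_apply i).comp hxm).stronglyMeasurable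
    have hmul : (μ[(fun ω => x ω i) * ε j | MeasurableSpace.comap x inferInstance]) =ᵐ[μ]
        (fun ω => x ω i) * (μ[ε j | MeasurableSpace.comap x inferInstance]) :=
      condExp_mul_of_stronglyMeasurable_left hsmx (hintxy i j) hε_int
    calc ∫ ω, x ω i * ε j ω ∂μ
        = ∫ ω, (μ[(fun ω => x ω i) * ε j | MeasurableSpace.comap x inferInstance]) ω ∂μ :=
          (integral_condExp hm).symm
      _ = ∫ ω, (0:ℝ) ∂μ := by
          refine integral_congr_ae ?_
          refine hmul.trans ?_
          filter_upwards [hcondε] with ω hω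
          simp [hω]
      _ = 0 := integral_zero _ _
  -- the risk decomposition for a general W
  have hrisk : ∀ W : Matrix (Fin d) (Fin p) ℝ,
      ∫ ω, ∑ j, ((y ω - Wᵀ.mulVec (x ω)) j) ^ 2 ∂μ = σ2 + frobSq (S * (Wstar - W)) := by
    intro W
    set D := Wstar - W with hD
    set q : Fin p → Ω → ℝ := fun j ω => ∑ i, D i j * x ω i with hq
    have hpt : ∀ ω j, (y ω - Wᵀ.mulVec (x ω)) j = ε j ω + q j ω := by
      intro ω j
      simp only [Pi.sub_apply, hεdef, hq, hD, hmv, Matrix.sub_apply, sub_mul,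
        Finset.sum_sub_distrib]
      ring
    have hq2 : ∀ j ω, (q j ω) ^ 2 = ∑ i, ∑ k, D i j * D k j * (x ω i * x ω k) := by
      intro j ω
      rw [sq, hq, Finset.sum_mul_sum]
      exact Finset.sum_congr rfl fun i _ => Finset.sum_congr rfl fun k _ => by ring
    have hεq : ∀ j ω, ε j ω * q j ω = ∑ i, D i j * (x ω i * ε j ω) := by
      intro j ω
      rw [hq, Finset.mul_sum]
      exact Finset.sum_congr rfl fun i _ => by ring
    have hA : Integrable (fun ω => ∑ j, (ε j ω) ^ 2) μ := hintL Wstar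
    have hB : Integrable (fun ω => ∑ j, (q j ω) ^ 2) μ := by
      have : Integrable (fun ω => ∑ j, ∑ i, ∑ k, D i j * D k j * (x ω i * x ω k)) μ :=
        integrable_finset_sum _ fun j _ => integrable_finset_sum _ fun i _ =>
          integrable_finset_sum _ fun k _ => (hintxx i k).const_mul _
      exact this.congr (by filter_upwards with ω; simp [hq2])
    have hC : Integrable (fun ω => ∑ j, ε j ω * q j ω) μ := by
      have : Integrable (fun ω => ∑ j, ∑ i, D i j * (x ω i * ε j ω)) μ :=
        integrable_finset_sum _ fun j _ => integrable_finset_sum _ fun i _ =>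
          (hintxy i j).const_mul _
      exact this.congr (by filter_upwards with ω; simp [hεq])
    have hsplit : ∫ ω, ∑ j, ((y ω - Wᵀ.mulVec (x ω)) j) ^ 2 ∂μ
        = (∫ ω, ∑ j, (ε j ω) ^ 2 ∂μ) + ((∫ ω, ∑ j, (q j ω) ^ 2 ∂μ)
          + 2 * ∫ ω, ∑ j, ε j ω * q j ω ∂μ) := by
      have hptF : (fun ω => ∑ j, ((y ω - Wᵀ.mulVec (x ω)) j) ^ 2)
          = fun ω => (∑ j, (ε j ω) ^ 2) + ((∑ j, (q j ω) ^ 2)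
            + 2 * ∑ j, ε j ω * q j ω) := by
        funext ω
        simp only [hpt, Finset.mul_sum, ← Finset.sum_add_distrib]
        exact Finset.sum_congr rfl fun j _ => by ring
      have hC2 : Integrable (fun ω => 2 * ∑ j, ε j ω * q j ω) μ := hC.const_mul 2
      have hBC : Integrable (fun ω => (∑ j, (q j ω) ^ 2)
          + 2 * ∑ j, ε j ω * q j ω) μ := hB.add hC2
      rw [hptF, integral_add hA hBC, integral_add hB hC2, integral_const_mul]
    have hεqF : ∀ j, (fun ω => ε j ω * q j ω)
        = fun ω => ∑ i, D i j * (x ω i * ε j ω) := fun j => funext fun ω => hεq j ω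
    have hCzero : ∫ ω, ∑ j, ε j ω * q j ω ∂μ = 0 := by
      rw [integral_finset_sum _ (fun j _ => by
        rw [hεqF j]
        exact integrable_finset_sum _ fun i _ => (hintxy i j).const_mul _)]
      refine Finset.sum_eq_zero fun j _ => ?_
      rw [hεqF j, integral_finset_sum _ (fun i _ => (hintxy i j).const_mul _)]
      refine Finset.sum_eq_zero fun i _ => ?_
      rw [integral_const_mul, hcross i j, mul_zero]
    have hBval : ∫ ω, ∑ j, (q j ω) ^ 2 ∂μ = frobSq (S * D) := by
      have hq2F : ∀ j, (fun ω => (q j ω) ^ 2)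
          = fun ω => ∑ i, ∑ k, D i j * D k j * (x ω i * x ω k) :=
        fun j => funext fun ω => hq2 j ω
      have h1 : ∫ ω, ∑ j, (q j ω) ^ 2 ∂μ = ∑ j, ∑ i, ∑ k, D i j * D k j * G i k := by
        rw [integral_finset_sum _ (fun j _ => by
          rw [hq2F j]
          exact integrable_finset_sum _ fun i _ =>
            integrable_finset_sum _ fun k _ => (hintxx i k).const_mul _)]
        refine Finset.sum_congr rfl fun j _ => ?_
        rw [hq2F j, integral_finset_sum _ (fun i _ => integrable_finset_sum _ fun k _ =>
          (hintxx i k).const_mul _)]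
        refine Finset.sum_congr rfl fun i _ => ?_
        rw [integral_finset_sum _ (fun k _ => (hintxx i k).const_mul _)]
        refine Finset.sum_congr rfl fun k _ => ?_
        rw [integral_const_mul, ← hsecond i k]
      rw [h1]
      -- the Finset algebra
      have hS' : ∀ a b, S a b = S b a := fun a b => by conv_lhs => rw [← hSsymm, transpose_apply]
      have hGik : ∀ i k, G i k = ∑ l, S l i * S l k := by
        intro i k
        rw [← hSq, Matrix.mul_apply]
        exact Finset.sum_congr rfl fun l _ => by rw [hS' i l]
      have hsqe : ∀ (l : Fin d) (j : Fin p),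
          ((S * D) l j) ^ 2 = ∑ i, ∑ k, S l i * D i j * (S l k * D k j) := by
        intro l j
        rw [sq, Matrix.mul_apply, Finset.sum_mul_sum]
      rw [frobSq]
      conv_rhs => rw [Finset.sum_comm]
      refine Finset.sum_congr rfl fun j _ => ?_
      simp only [hsqe, hGik, Finset.mul_sum]
      conv_rhs => rw [Finset.sum_comm]
      refine Finset.sum_congr rfl fun i _ => ?_
      conv_rhs => rw [Finset.sum_comm]
      exact Finset.sum_congr rfl fun k _ => Finset.sum_congr rfl fun l _ => by ring
    rw [hsplit, hCzero, hBval]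
    have : ∫ ω, ∑ j, (ε j ω) ^ 2 ∂μ = σ2 := rfl
    rw [this]
    ring
  -- apply with W = Rᵀ * Vstar
  have hlem : ∀ (A : Matrix (Fin m) (Fin p) ℝ) (v : Fin d → ℝ),
      (Rᵀ * A)ᵀ.mulVec v = Aᵀ.mulVec (R.mulVec v) := by
    intro A v
    rw [Matrix.transpose_mul, Matrix.transpose_transpose, Matrix.mulVec_mulVec]
  have hWeq : (fun ω => ∑ j, ((y ω - Vstarᵀ.mulVec (R.mulVec (x ω))) j) ^ 2)
      = fun ω => ∑ j, ((y ω - (Rᵀ * Vstar)ᵀ.mulVec (x ω)) j) ^ 2 := by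
    funext ω
    rw [hlem Vstar (x ω)]
  have hmat : S * (Wstar - Rᵀ * Vstar) = ((1 : Matrix (Fin d) (Fin d) ℝ)
      - S * Rᵀ * (R * G * Rᵀ)⁻¹ * R * S) * S * Wstar := by
    show S * (Wstar - Rᵀ * ((R * G * Rᵀ)⁻¹ * R * G * Wstar)) = _
    rw [Matrix.mul_sub, Matrix.sub_mul, Matrix.sub_mul, Matrix.one_mul]
    congr 1
    simp only [← hSq, Matrix.mul_assoc]
  have hmain : ∫ ω, ∑ j, ((y ω - Vstarᵀ.mulVec (R.mulVec (x ω))) j) ^ 2 ∂μ = σ2 + Approx := by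
    rw [show (∫ ω, ∑ j, ((y ω - Vstarᵀ.mulVec (R.mulVec (x ω))) j) ^ 2 ∂μ)
        = ∫ ω, ∑ j, ((y ω - (Rᵀ * Vstar)ᵀ.mulVec (x ω)) j) ^ 2 ∂μ from by rw [hWeq]]
    rw [hrisk (Rᵀ * Vstar)]
    congr 1
    show frobSq (S * (Wstar - Rᵀ * Vstar)) = Approx
    rw [hmat]
  refine ⟨hmain, ?_⟩
  rw [hmain]
  refine le_add_of_nonneg_right ?_
  exact Finset.sum_nonneg fun i _ => Finset.sum_nonneg fun j _ => sq_nonneg _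
end
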